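/- Let α ∈ (0, 1/2], let M be a surjective isometry of ℝ², let R ≥ 5 + 2^{1+1/α} with ‖M(0)‖ ≤ R, and set Γ = M '' {y : y₁ ≥ 0 and y₂ = 0} and Q = M '' {y : y₁ ≥ 0 and 2|y₂| ≤ y₁^α}. Then for every x ∈ ℝ² with x ∉ Q and ‖x‖ ≥ 2R, one has d(x, Γ) ≥ 2^{−2−α} ‖x‖^α. -/

import Mathlib

/-!
Pulling back by `M`, the point `y = M⁻¹ x` has `‖y‖ ≥ ‖x‖ - ‖M 0‖ ≥ ‖x‖ / 2`, lies outside the cusp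
`2|y₁| ≤ y₀^α`, and `d(x, Γ)` is its distance to the half-axis `{y₀ ≥ 0, y₁ = 0}`. That distance is
at least `|y₁|`, and at least `‖y‖` when `y₀ < 0`. Since `‖y‖ ≤ |y₀| + |y₁|`, either `|y₁| ≥ ‖y‖ / 2`,
or `y₀ ≥ ‖y‖ / 2` and then being outside the cusp gives `|y₁| > (‖y‖ / 2)^α / 2`.
-/

open Metric Set

local notation "ℝ²" => EuclideanSpace ℝ (Fin 2)

def posHalfAxis : Set ℝ² := {y | 0 ≤ y 0 ∧ y 1 = 0}

def rpowCusp (α : ℝ) : Set ℝ² := {y | 0 ≤ y 0 ∧ 2 * |y 1| ≤ y 0 ^ α}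

lemma posHalfAxis_nonempty : posHalfAxis.Nonempty := ⟨0, by simp [posHalfAxis]⟩

lemma norm_le_abs_add_abs (y : ℝ²) : ‖y‖ ≤ |y 0| + |y 1| := by
  have h : ‖y‖ ^ 2 ≤ (|y 0| + |y 1|) ^ 2 := by
    rw [EuclideanSpace.real_norm_sq_eq, Fin.sum_univ_two]
    nlinarith [sq_abs (y 0), sq_abs (y 1), abs_nonneg (y 0), abs_nonneg (y 1)]
  exact le_of_pow_le_pow_left₀ two_ne_zero (by positivity) h

lemma abs_snd_le_dist_of_mem_posHalfAxis {y q : ℝ²} (hq : q ∈ posHalfAxis) :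
    |y 1| ≤ dist y q := by
  simpa [Real.dist_eq, hq.2] using PiLp.dist_apply_le y q 1

lemma norm_le_dist_of_fst_neg_of_mem_posHalfAxis {y q : ℝ²} (hy : y 0 < 0) (hq : q ∈ posHalfAxis) :
    ‖y‖ ≤ dist y q := by
  have h : ‖y‖ ^ 2 ≤ dist y q ^ 2 := by
    rw [EuclideanSpace.real_norm_sq_eq, PiLp.dist_sq_eq_of_L2, Fin.sum_univ_two,
      Fin.sum_univ_two, Real.dist_eq, Real.dist_eq, sq_abs, sq_abs, hq.2]
    nlinarith [hq.1]
  exact le_of_pow_le_pow_left₀ two_ne_zero dist_nonneg h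

lemma rpow_half_norm_div_two_le_infDist_posHalfAxis {α : ℝ} (hα₀ : 0 ≤ α) (hα₁ : α ≤ 1)
    {y : ℝ²} (hy : 2 ≤ ‖y‖) (hyQ : y ∉ rpowCusp α) :
    (‖y‖ / 2) ^ α / 2 ≤ infDist y posHalfAxis := by
  have hrpow : (‖y‖ / 2) ^ α ≤ ‖y‖ / 2 := Real.rpow_le_self_of_one_le (by linarith) hα₁
  have hpos : 0 ≤ (‖y‖ / 2) ^ α := by positivity
  rw [le_infDist posHalfAxis_nonempty]
  intro q hq
  rcases lt_or_ge (y 0) 0 with hneg | hnonneg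
  · linarith [norm_le_dist_of_fst_neg_of_mem_posHalfAxis hneg hq]
  refine le_trans ?_ (abs_snd_le_dist_of_mem_posHalfAxis hq)
  have hout : y 0 ^ α < 2 * |y 1| := lt_of_not_ge fun h => hyQ ⟨hnonneg, h⟩
  rcases le_total (‖y‖ / 2) (y 0) with hbig | hsmall
  · linarith [Real.rpow_le_rpow (by positivity) hbig hα₀]
  · linarith [norm_le_abs_add_abs y, abs_of_nonneg hnonneg]

lemma two_rpow_neg_two_sub_mul_rpow_le {α t : ℝ} (hα : α ≤ 1) (ht : 0 ≤ t) :
    2 ^ (-2 - α) * t ^ α ≤ (t / 4) ^ α / 2 := by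
  have h : (t / 4) ^ α / 2 = 2 ^ (-1 - 2 * α) * t ^ α := by
    rw [Real.div_rpow ht (by norm_num), show (4 : ℝ) = 2 ^ (2 : ℝ) by norm_num,
      ← Real.rpow_mul (by norm_num), show (-1 - 2 * α) = -(1 + 2 * α) by ring,
      Real.rpow_neg (by norm_num), Real.rpow_add two_pos, Real.rpow_one]
    field_simp
  rw [h]
  exact mul_le_mul_of_nonneg_right
    (Real.rpow_le_rpow_of_exponent_le one_le_two (by linarith)) (by positivity)

theorem dist_to_ray_estimate (α : ℝ) (hα : 0 < α) (hα' : α ≤ 1 / 2)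
    (M : EuclideanSpace ℝ (Fin 2) ≃ᵢ EuclideanSpace ℝ (Fin 2))
    (R : ℝ) (hR : 5 + 2 ^ (1 + 1 / α) ≤ R) (hRM : ‖M 0‖ ≤ R)
    (Γ Q : Set (EuclideanSpace ℝ (Fin 2)))
    (hΓ : Γ = M '' {y : EuclideanSpace ℝ (Fin 2) | 0 ≤ y 0 ∧ y 1 = 0})
    (hQ : Q = M '' {y : EuclideanSpace ℝ (Fin 2) | 0 ≤ y 0 ∧ 2 * |y 1| ≤ (y 0) ^ α})
    (x : EuclideanSpace ℝ (Fin 2)) (hxQ : x ∉ Q) (hx : 2 * R ≤ ‖x‖) :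
    2 ^ (-2 - α) * ‖x‖ ^ α ≤ infDist x Γ := by
  subst hΓ hQ
  set y := M.symm x
  have hMy : M y = x := M.apply_symm_apply x
  have hy : ‖x‖ / 2 ≤ ‖y‖ := by
    have : ‖x‖ ≤ ‖y‖ + ‖M 0‖ := by
      calc ‖x‖ ≤ dist x (M 0) + ‖M 0‖ := by simpa using dist_triangle x (M 0) 0
        _ = ‖y‖ + ‖M 0‖ := by rw [← hMy, M.dist_eq, dist_zero_right]
    linarith
  have hR₂ : 2 ≤ R := by linarith [Real.rpow_pos_of_pos two_pos (1 + 1 / α)]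
  have hyQ : y ∉ rpowCusp α := fun h => hxQ ⟨y, h, hMy⟩
  calc 2 ^ (-2 - α) * ‖x‖ ^ α ≤ (‖x‖ / 4) ^ α / 2 :=
        two_rpow_neg_two_sub_mul_rpow_le (by linarith) (norm_nonneg x)
    _ ≤ (‖y‖ / 2) ^ α / 2 := by
        gcongr (?_ : ℝ) ^ α / 2
        linarith
    _ ≤ infDist y posHalfAxis :=
        rpow_half_norm_div_two_le_infDist_posHalfAxis hα.le (by linarith) (by linarith) hyQ
    _ = infDist (M y) (M '' posHalfAxis) := (infDist_image M.isometry).symm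
    _ = infDist x (M '' posHalfAxis) := by rw [hMy]
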